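/- arXiv:2010.07175 — 2 statements merged into one kernel-verified Lean document; each statement's English description precedes it below -/
import Mathlib

section
/- Let C = η₀A₀ ⊕ η₁A₁ ⊕ η₂A₂ be a skew (σ, δ)-constacyclic code of length n over R = F_{p^m}[v]/⟨v^3 - v⟩ with each λ_i ∈ {1, -1}, where x^n - λ_i = h_i(x)f_i(x) and f_i generates A_i. Then C^⊥ ⊆ C if and only if x^n - λ_i right divides h_i*(x)h_i(x) in F_{p^m}[x;Θ] for all i = 0, 1, 2. -/
open Polynomial

set_option synthInstance.maxHeartbeats 1000000
set_option maxHeartbeats 1000000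

noncomputable section

/-- The ring `R = F[v]/⟨v^3 - v⟩`. -/
abbrev Rq (F : Type) [Field F] : Type :=
  Polynomial F ⧸ Ideal.span {(X : Polynomial F) ^ 3 - X}

/-- The image of `v` in `R`. -/
def vR (F : Type) [Field F] : Rq F := Ideal.Quotient.mk _ X

/-- The orthogonal idempotents `η₀ = 1 - v²`, `η₁ = ζ(v² + v)`, `η₂ = ζ(v² - v)`
with `ζ = 2⁻¹`. -/
def eta (F : Type) [Field F] : Fin 3 → Rq F :=
  ![1 - vR F ^ 2,
    algebraMap F (Rq F) (2 : F)⁻¹ * (vR F ^ 2 + vR F),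
    algebraMap F (Rq F) (2 : F)⁻¹ * (vR F ^ 2 - vR F)]

/-- Multiplication in the skew polynomial ring `S[x;σ]`, where polynomials are
represented as finitely supported coefficient functions `ℕ →₀ S` and
`(a x^i) (b x^j) = a σ^i(b) x^{i+j}`. -/
noncomputable def skewMul {S : Type} [Ring S] (σ : RingAut S) (f g : ℕ →₀ S) : ℕ →₀ S :=
  f.sum fun i a => g.sum fun j b => Finsupp.single (i + j) (a * (σ ^ i) b)

/-- A code `C` of length `n` over `S` is skew `(σ, δ)`-constacyclic if it is closed
under the shift `(c₀, …, c_{n-1}) ↦ (σ(δ c_{n-1}), σ(c₀), …, σ(c_{n-2}))`. -/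
def IsSkewConstacyclic {S : Type} [CommRing S] {n : ℕ} [NeZero n]
    (σ : RingAut S) (δ : S) (C : Set (Fin n → S)) : Prop :=
  ∀ c ∈ C, (fun i : Fin n => σ ((if i = 0 then δ else 1) * c (i - 1))) ∈ C

/-- The Euclidean dual of a code, with respect to the standard bilinear form. -/
def dualSet {ι S : Type} [Fintype ι] [CommRing S] (C : Set (ι → S)) : Set (ι → S) :=
  {a | ∀ b ∈ C, ∑ t, a t * b t = 0}

/-- The polynomial (coefficient vector) associated to a codeword. -/
noncomputable def toPoly {S : Type} [Semiring S] {n : ℕ} (c : Fin n → S) : ℕ →₀ S :=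
  ∑ i : Fin n, Finsupp.single (i : ℕ) (c i)

/-- A polynomial is monic: it has a coefficient equal to `1` beyond which all
coefficients vanish. -/
def IsMonicPoly {S : Type} [Semiring S] (g : ℕ →₀ S) : Prop :=
  ∃ d, g d = 1 ∧ ∀ j, d < j → g j = 0

/-- The skew reciprocal polynomial `h*(x) = Σ_{j=0}^k Θ^j(h_{k-j}) x^j` of a
polynomial `h` of degree (at most) `k`. -/
noncomputable def skewRecip {S : Type} [Ring S] (Θ : RingAut S) (k : ℕ) (h : ℕ →₀ S) :
    ℕ →₀ S :=
  ∑ j ∈ Finset.range (k + 1), Finsupp.single j ((Θ ^ j) (h (k - j)))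

/-!
Evaluation at the roots `0, 1, -1` of `v ^ 3 - v` identifies `R` with `F × F × F` and sends
`η₀, η₁, η₂` to the unit vectors, so `C^⊥ ⊆ C` splits into the three conditions `Aᵢ^⊥ ⊆ Aᵢ`.

For one component write `x^n - λ = h f` with `f` monic of degree `d`; then `h` is monic of degree
`e = n - d`, and `f h = x^n - λ` as well because `σ` fixes `λ`. The coordinate pairing of
`x^j h*` (`j < d`) with `x^i f` (`i < e`) is a coefficient of `f h` of degree strictly between
`0` and `n`, hence zero, and a triangularity argument shows that these `x^j h*` span `A^⊥`.
So `A^⊥ ⊆ A` iff `h*` is a left multiple of `f`, iff `h* h` is a left multiple of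
`f h = x^n - λ`; the power of `x` between the reciprocals taken with respect to `deg h` and to
`k ≥ deg h` cancels since `x^n - λ` has a nonzero constant term.
-/

open Finset

theorem Finsupp.exists_last_ne_zero {M : Type} [Zero M] (u : ℕ →₀ M) (hu : u ≠ 0) :
    ∃ d, u d ≠ 0 ∧ ∀ i, d < i → u i = 0 := by
  classical
  have hne := Finsupp.support_nonempty_iff.mpr hu
  exact ⟨u.support.max' hne, Finsupp.mem_support_iff.mp (max'_mem _ _),
    fun i hi => Finsupp.notMem_support_iff.mp fun hmem => (le_max' _ _ hmem).not_gt hi⟩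

theorem RingAut.pow_apply_eq_self {S : Type} [Ring S] {σ : RingAut S} {x : S} (hx : σ x = x)
    (i : ℕ) : (σ ^ i) x = x := by
  induction i with
  | zero => rfl
  | succ i ih => rw [pow_succ, RingAut.mul_apply, hx, ih]

section SkewMul

variable {S : Type} [Ring S] (σ : RingAut S)

theorem skewMul_apply (u v : ℕ →₀ S) (c : ℕ) :
    skewMul σ u v c = ∑ i ∈ range (c + 1), u i * (σ ^ i) (v (c - i)) := by
  classical
  have inner (i : ℕ) : (v.sum fun j b => Finsupp.single (i + j) (u i * (σ ^ i) b)) c =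
      if i ≤ c then u i * (σ ^ i) (v (c - i)) else 0 := by
    rw [Finsupp.sum, Finsupp.finsetSum_apply]
    simp_rw [Finsupp.single_apply]
    split_ifs with hic
    · rw [sum_eq_single (c - i) (fun j _ hj => if_neg (by omega))
        (fun hj => by rw [if_pos (by omega), Finsupp.notMem_support_iff.mp hj, map_zero,
          mul_zero])]
      exact if_pos (by omega)
    · exact sum_eq_zero fun j _ => if_neg (by omega)
  rw [skewMul, Finsupp.sum, Finsupp.finsetSum_apply]
  simp_rw [inner, ← sum_filter]
  refine sum_subset (fun i hi => ?_) (fun i hic hi => ?_)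
  · rw [mem_filter] at hi
    exact mem_range.mpr (by omega)
  · have : u i = 0 := by
      by_contra hu
      exact hi (mem_filter.mpr ⟨Finsupp.mem_support_iff.mpr hu, by rw [mem_range] at hic; omega⟩)
    rw [this, zero_mul]

@[simp]
theorem zero_skewMul (v : ℕ →₀ S) : skewMul σ 0 v = 0 := by
  ext c; simp [skewMul_apply]

@[simp]
theorem skewMul_zero (u : ℕ →₀ S) : skewMul σ u 0 = 0 := by
  ext c; simp [skewMul_apply]

theorem add_skewMul (u u' v : ℕ →₀ S) :
    skewMul σ (u + u') v = skewMul σ u v + skewMul σ u' v := by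
  ext c; simp [skewMul_apply, add_mul, sum_add_distrib]

theorem skewMul_add (u v v' : ℕ →₀ S) :
    skewMul σ u (v + v') = skewMul σ u v + skewMul σ u v' := by
  ext c; simp [skewMul_apply, mul_add, sum_add_distrib]

theorem sub_skewMul (u u' v : ℕ →₀ S) :
    skewMul σ (u - u') v = skewMul σ u v - skewMul σ u' v := by
  ext c; simp [skewMul_apply, sub_mul]

theorem skewMul_sub (u v v' : ℕ →₀ S) :
    skewMul σ u (v - v') = skewMul σ u v - skewMul σ u v' := by
  ext c; simp [skewMul_apply, mul_sub]

theorem smul_skewMul (a : S) (u v : ℕ →₀ S) :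
    skewMul σ (a • u) v = a • skewMul σ u v := by
  ext c; simp [skewMul_apply, mul_sum, mul_assoc]

theorem sum_skewMul {ι : Type} (s : Finset ι) (u : ι → ℕ →₀ S) (v : ℕ →₀ S) :
    skewMul σ (∑ j ∈ s, u j) v = ∑ j ∈ s, skewMul σ (u j) v := by
  ext c; simp [skewMul_apply, sum_mul, Finsupp.finsetSum_apply, sum_comm (s := range _)]

theorem single_skewMul_apply (m : ℕ) (a : S) (v : ℕ →₀ S) (c : ℕ) :
    skewMul σ (Finsupp.single m a) v c = if m ≤ c then a * (σ ^ m) (v (c - m)) else 0 := by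
  rw [skewMul_apply]
  split_ifs with hmc
  · rw [sum_eq_single m (fun i _ hi => by rw [Finsupp.single_eq_of_ne hi, zero_mul])
      (fun hm => absurd (mem_range.mpr (by omega)) hm), Finsupp.single_eq_same]
  · exact sum_eq_zero fun i hi => by
      rw [Finsupp.single_eq_of_ne (by rw [mem_range] at hi; omega), zero_mul]

theorem skewMul_single_apply (u : ℕ →₀ S) (m : ℕ) (b : S) (c : ℕ) :
    skewMul σ u (Finsupp.single m b) c = if m ≤ c then u (c - m) * (σ ^ (c - m)) b else 0 := by
  rw [skewMul_apply]
  split_ifs with hmc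
  · rw [sum_eq_single (c - m) (fun i hi hne => by
        rw [Finsupp.single_eq_of_ne (by rw [mem_range] at hi; omega), map_zero, mul_zero])
      (fun hm => absurd (mem_range.mpr (by omega)) hm), Nat.sub_sub_self hmc,
      Finsupp.single_eq_same]
  · exact sum_eq_zero fun i hi => by
      rw [Finsupp.single_eq_of_ne (by rw [mem_range] at hi; omega), map_zero, mul_zero]

theorem single_skewMul_single (i j : ℕ) (a b : S) :
    skewMul σ (Finsupp.single i a) (Finsupp.single j b) =
      Finsupp.single (i + j) (a * (σ ^ i) b) := by
  ext c
  rw [single_skewMul_apply, Finsupp.single_apply, Finsupp.single_apply]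
  split_ifs <;> first | omega | simp_all

@[simp]
theorem one_skewMul (v : ℕ →₀ S) : skewMul σ (Finsupp.single 0 1) v = v := by
  ext c; simp [single_skewMul_apply]

@[simp]
theorem skewMul_one (u : ℕ →₀ S) : skewMul σ u (Finsupp.single 0 1) = u := by
  ext c; simp [skewMul_single_apply]

theorem skewMul_assoc (u v w : ℕ →₀ S) :
    skewMul σ (skewMul σ u v) w = skewMul σ u (skewMul σ v w) := by
  have monomials (i j : ℕ) (a b : S) (w : ℕ →₀ S) :
      skewMul σ (skewMul σ (.single i a) (.single j b)) w =
        skewMul σ (.single i a) (skewMul σ (.single j b) w) := by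
    induction w using Finsupp.induction with
    | zero => simp
    | single_add l c w _ _ ih =>
      rw [skewMul_add, skewMul_add, skewMul_add, ih]
      simp only [single_skewMul_single, map_mul, pow_add, add_assoc, mul_assoc]
      rfl
  have monomial_left (i : ℕ) (a : S) (v : ℕ →₀ S) :
      skewMul σ (skewMul σ (.single i a) v) w = skewMul σ (.single i a) (skewMul σ v w) := by
    induction v using Finsupp.induction with
    | zero => simp
    | single_add j b v _ _ ih =>
      rw [skewMul_add, add_skewMul, ih, monomials, add_skewMul, skewMul_add]
  induction u using Finsupp.induction with
  | zero => simp
  | single_add i a u _ _ ih => rw [add_skewMul, add_skewMul, add_skewMul, ih, monomial_left]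

theorem skewMul_apply_eq_zero_of_le {u v : ℕ →₀ S} {du dv c : ℕ}
    (hu : ∀ i, du ≤ i → u i = 0) (hv : ∀ j, dv < j → v j = 0) (hc : du + dv ≤ c) :
    skewMul σ u v c = 0 := by
  rw [skewMul_apply]
  refine sum_eq_zero fun i hi => ?_
  by_cases hi' : du ≤ i
  · rw [hu i hi', zero_mul]
  · rw [hv (c - i) (by omega), map_zero, mul_zero]

theorem skewMul_apply_add {u v : ℕ →₀ S} {du dv : ℕ}
    (hu : ∀ i, du < i → u i = 0) (hv : ∀ j, dv < j → v j = 0) :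
    skewMul σ u v (du + dv) = u du * (σ ^ du) (v dv) := by
  rw [skewMul_apply, sum_eq_single du (fun i _ hne => ?_)
    (fun h => absurd (mem_range.mpr (by omega)) h), Nat.add_sub_cancel_left]
  rcases lt_or_gt_of_ne hne with h | h
  · rw [hv _ (by omega), map_zero, mul_zero]
  · rw [hu i h, zero_mul]

theorem skewMul_apply_of_forall_lt {u : ℕ →₀ S} {t : ℕ} (hu : ∀ i < t, u i = 0)
    (v : ℕ →₀ S) : skewMul σ u v t = u t * (σ ^ t) (v 0) := by
  rw [skewMul_apply, sum_eq_single t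
    (fun i hi hne => by rw [hu i (by rw [mem_range] at hi; omega), zero_mul])
    (fun h => absurd (self_mem_range_succ t) h), Nat.sub_self]

theorem skewMul_apply_eq_sum_single_skewMul {w : ℕ →₀ S} {D : ℕ} (hw : ∀ j, D ≤ j → w j = 0)
    (v : ℕ →₀ S) (t : ℕ) :
    skewMul σ w v t = ∑ j ∈ range D, w j * skewMul σ (.single j 1) v t := by
  have hsupp : w.support ⊆ range D := fun j hj =>
    mem_range.mpr (not_le.mp fun h => Finsupp.mem_support_iff.mp hj (hw j h))
  conv_lhs => rw [← w.sum_single, Finsupp.sum_of_support_subset w hsupp _ (by simp)]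
  rw [sum_skewMul, Finsupp.finsetSum_apply]
  refine sum_congr rfl fun j _ => ?_
  simp only [single_skewMul_apply]
  split_ifs <;> simp

theorem single_skewMul_injective (m : ℕ) :
    Function.Injective (skewMul σ (.single m 1)) := by
  intro u v huv
  ext c
  have := congrArg (· (c + m)) huv
  simp only [single_skewMul_apply, if_pos (Nat.le_add_left m c), Nat.add_sub_cancel,
    one_mul] at this
  exact (σ ^ m).injective this

theorem exists_eq_single_skewMul {u : ℕ →₀ S} {m : ℕ} (hu : ∀ i < m, u i = 0) :
    ∃ w, u = skewMul σ (.single m 1) w := by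
  classical
  refine ⟨Finsupp.onFinset (u.support.image (· - m)) (fun j => (σ ^ m).symm (u (j + m)))
    fun j hj => mem_image.mpr ⟨j + m, Finsupp.mem_support_iff.mpr fun h => hj (by
      rw [h, map_zero]), Nat.add_sub_cancel _ _⟩, ?_⟩
  ext c
  rw [single_skewMul_apply]
  split_ifs with hc
  · simp [Nat.sub_add_cancel hc]
  · exact hu c (by omega)

theorem skewRecip_apply (k : ℕ) (h : ℕ →₀ S) (u : ℕ) :
    skewRecip σ k h u = if u ≤ k then (σ ^ u) (h (k - u)) else 0 := by
  rw [skewRecip, Finsupp.finsetSum_apply]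
  split_ifs with huk
  · rw [sum_eq_single u (fun j _ hj => Finsupp.single_eq_of_ne' hj)
      (fun hu => absurd (mem_range.mpr (by omega)) hu), Finsupp.single_eq_same]
  · exact sum_eq_zero fun j hj => Finsupp.single_eq_of_ne' (by rw [mem_range] at hj; omega)

theorem skewRecip_apply_zero (k : ℕ) (h : ℕ →₀ S) : skewRecip σ k h 0 = h k := by
  simp [skewRecip_apply]

theorem skewRecip_apply_of_lt {k u : ℕ} (h : ℕ →₀ S) (hu : k < u) : skewRecip σ k h u = 0 := by
  rw [skewRecip_apply, if_neg (by omega)]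

theorem skewRecip_eq_single_skewMul {h : ℕ →₀ S} {e k : ℕ} (hek : e ≤ k)
    (he : ∀ j, e < j → h j = 0) :
    skewRecip σ k h = skewMul σ (.single (k - e) 1) (skewRecip σ e h) := by
  ext j
  rw [single_skewMul_apply, skewRecip_apply, skewRecip_apply, one_mul]
  by_cases hj : k - e ≤ j
  · rw [if_pos hj]
    by_cases hjk : j ≤ k
    · rw [if_pos hjk, if_pos (by omega), ← RingAut.mul_apply, ← pow_add, Nat.add_sub_cancel' hj,
        show e - (j - (k - e)) = k - j by omega]
    · rw [if_neg hjk, if_neg (by omega), map_zero]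
  · rw [if_neg hj, if_pos (by omega), he _ (by omega), map_zero]

section NoZeroDivisors

variable [NoZeroDivisors S]

theorem skewMul_ne_zero {u v : ℕ →₀ S} (hu : u ≠ 0) (hv : v ≠ 0) : skewMul σ u v ≠ 0 := by
  obtain ⟨du, hdu, hu'⟩ := u.exists_last_ne_zero hu
  obtain ⟨dv, hdv, hv'⟩ := v.exists_last_ne_zero hv
  intro h
  have := skewMul_apply_add σ hu' hv'
  rw [h, Finsupp.coe_zero, Pi.zero_apply] at this
  exact mul_ne_zero hdu ((map_ne_zero_iff _ (σ ^ du).injective).mpr hdv) this.symm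

theorem skewMul_right_cancel {u u' v : ℕ →₀ S} (hv : v ≠ 0)
    (h : skewMul σ u v = skewMul σ u' v) : u = u' := by
  rw [← sub_eq_zero]
  by_contra hne
  exact skewMul_ne_zero σ hne hv (by rw [sub_skewMul, h, sub_self])

theorem apply_eq_zero_of_skewMul_apply_eq_zero {u v : ℕ →₀ S} (hv : v 0 ≠ 0) {m : ℕ}
    (h : ∀ c < m, skewMul σ u v c = 0) : ∀ c < m, u c = 0 := by
  intro c
  induction c using Nat.strong_induction_on with
  | _ c ih =>
    intro hc
    have := h c hc
    rw [skewMul_apply_of_forall_lt σ (fun i hi => ih i hi (by omega))] at this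
    exact (mul_eq_zero.mp this).resolve_right ((map_ne_zero_iff _ (σ ^ c).injective).mpr hv)

theorem exists_eq_skewMul_of_skewMul_eq_single_skewMul {u v w : ℕ →₀ S} (hv : v 0 ≠ 0)
    {m : ℕ} (h : skewMul σ u v = skewMul σ (.single m 1) w) : ∃ u', w = skewMul σ u' v := by
  obtain ⟨u', rfl⟩ := exists_eq_single_skewMul σ (m := m)
    (apply_eq_zero_of_skewMul_apply_eq_zero σ hv fun c hc => by
      rw [h, single_skewMul_apply, if_neg (by omega)])
  exact ⟨u', single_skewMul_injective σ m (by rw [← h, skewMul_assoc])⟩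

end NoZeroDivisors

end SkewMul

section Vectors

variable {S : Type} [Semiring S] {n : ℕ}

theorem toPoly_apply (c : Fin n → S) (t : Fin n) : toPoly c t = c t := by
  rw [toPoly, Finsupp.finsetSum_apply, sum_eq_single t
    (fun s _ hs => Finsupp.single_eq_of_ne' (Fin.val_injective.ne hs)) (by simp),
    Finsupp.single_eq_same]

theorem toPoly_apply_of_le (c : Fin n → S) {t : ℕ} (ht : n ≤ t) : toPoly c t = 0 := by
  rw [toPoly, Finsupp.finsetSum_apply]
  exact sum_eq_zero fun s _ => Finsupp.single_eq_of_ne' (by omega)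

theorem toPoly_restrict {w : ℕ →₀ S} (hw : ∀ j, n ≤ j → w j = 0) :
    toPoly (fun t : Fin n => w t) = w := by
  ext j
  rcases lt_or_ge j n with hj | hj
  · exact toPoly_apply _ ⟨j, hj⟩
  · rw [toPoly_apply_of_le _ hj, hw j hj]

theorem toPoly_add (c c' : Fin n → S) : toPoly (c + c') = toPoly c + toPoly c' := by
  simp [toPoly, sum_add_distrib]

theorem toPoly_smul (a : S) (c : Fin n → S) : toPoly (a • c) = a • toPoly c := by
  simp [toPoly, smul_sum]

end Vectors

theorem sub_mem_dualSet {ι S : Type} [Fintype ι] [CommRing S] {C : Set (ι → S)} {a b : ι → S}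
    (ha : a ∈ dualSet C) (hb : b ∈ dualSet C) : a - b ∈ dualSet C := fun c hc => by
  simp [sub_mul, sum_sub_distrib, ha c hc, hb c hc]

section Code

variable {F : Type} [Field F] (σ : RingAut F) {n : ℕ}

def skewCode (σ : RingAut F) (n : ℕ) (f : ℕ →₀ F) : Set (Fin n → F) :=
  {c | ∃ q, toPoly c = skewMul σ q f}

theorem X_pow_sub_C_apply (hn : n ≠ 0) (lam : F) (c : ℕ) :
    (Finsupp.single n 1 - Finsupp.single 0 lam : ℕ →₀ F) c =
      if c = n then 1 else if c = 0 then -lam else 0 := by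
  simp only [Finsupp.sub_apply, Finsupp.single_apply]
  split_ifs <;> first | omega | simp

variable {lam : F} {f h : ℕ →₀ F} {d e : ℕ}

theorem exists_monic_of_skewMul_eq_X_pow_sub_C (hn : n ≠ 0) (hf : f d = 1)
    (hfd : ∀ j, d < j → f j = 0)
    (hhf : skewMul σ h f = Finsupp.single n 1 - Finsupp.single 0 lam) :
    ∃ e, d + e = n ∧ h e = 1 ∧ ∀ j, e < j → h j = 0 := by
  have hEn := congrArg (· n) hhf
  simp only [X_pow_sub_C_apply hn] at hEn
  obtain ⟨e, he, hhe⟩ := h.exists_last_ne_zero (by rintro rfl; simp at hEn)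
  have lead := skewMul_apply_add σ hhe hfd
  rw [hf, map_one, mul_one, hhf, X_pow_sub_C_apply hn] at lead
  have hed : e + d = n := by
    by_contra hne
    have hed0 : e + d = 0 := by
      by_contra hne0
      rw [if_neg hne, if_neg hne0] at lead
      exact he lead.symm
    rw [skewMul_apply_eq_zero_of_le σ (du := e + 1) hhe hfd (by omega)] at hEn
    exact zero_ne_one hEn
  rw [if_pos hed] at lead
  exact ⟨e, by omega, lead.symm, hhe⟩

theorem apply_zero_ne_zero_of_skewMul_eq_X_pow_sub_C (hn : n ≠ 0) (hlam : lam ≠ 0)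
    (hhf : skewMul σ h f = Finsupp.single n 1 - Finsupp.single 0 lam) : f 0 ≠ 0 := by
  intro hf0
  have h0 := congrArg (· 0) hhf
  simp [skewMul_apply, hf0, X_pow_sub_C_apply hn, Ne.symm hn, hlam] at h0

/-- Although `x^n - λ` need not commute with `f`, it does in degrees `< n`, because `σ` fixes
`λ`; this is enough to move the left factor `h` of `x^n - λ` to the right. -/
theorem skewMul_comm_of_skewMul_eq_X_pow_sub_C (hn : n ≠ 0) (hσlam : σ lam = lam)
    (hf : f d = 1) (hfd : ∀ j, d < j → f j = 0) (hh : h e = 1) (hhe : ∀ j, e < j → h j = 0)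
    (hde : d + e = n) (hf0 : f 0 ≠ 0)
    (hhf : skewMul σ h f = Finsupp.single n 1 - Finsupp.single 0 lam) :
    skewMul σ f h = Finsupp.single n 1 - Finsupp.single 0 lam := by
  set E : ℕ →₀ F := Finsupp.single n 1 - Finsupp.single 0 lam
  have high (c : ℕ) (hc : n ≤ c) : (skewMul σ f h - E) c = 0 := by
    rw [Finsupp.sub_apply, X_pow_sub_C_apply hn, if_neg (by omega : c ≠ 0)]
    rcases hc.eq_or_lt with rfl | hc
    · rw [← hde, skewMul_apply_add σ hfd hhe, hf, hh, map_one, mul_one, if_pos rfl, sub_self]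
    · rw [skewMul_apply_eq_zero_of_le σ (du := d + 1) hfd hhe (by omega), if_neg hc.ne',
        sub_self]
  have low (c : ℕ) (hc : c < n) : skewMul σ (skewMul σ f h - E) f c = 0 := by
    rw [sub_skewMul, skewMul_assoc, hhf]
    simp [E, skewMul_sub, sub_skewMul, skewMul_single_apply, single_skewMul_apply, hc.not_ge,
      RingAut.pow_apply_eq_self hσlam, mul_comm]
  have hlow := apply_eq_zero_of_skewMul_apply_eq_zero σ hf0 low
  rw [← sub_eq_zero]
  ext c
  exact (lt_or_ge c n).elim (hlow c) (high c)

theorem apply_eq_zero_of_skewMul_apply_eq_zero_of_monic {q : ℕ →₀ F} (hf : f d = 1)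
    (hfd : ∀ j, d < j → f j = 0) (hde : d + e = n)
    (hq : ∀ c, n ≤ c → skewMul σ q f c = 0) : ∀ u, e ≤ u → q u = 0 := by
  by_contra! ⟨u, hu, hqu⟩
  obtain ⟨J, hJ, hqJ⟩ := q.exists_last_ne_zero (by rintro rfl; exact hqu rfl)
  have huJ : u ≤ J := not_lt.mp fun h => hqu (hqJ u h)
  have lead := skewMul_apply_add σ hqJ hfd
  rw [hf, map_one, mul_one, hq _ (by omega)] at lead
  exact hJ lead.symm

theorem single_skewMul_mem_skewCode (hfd : ∀ j, d < j → f j = 0) (hde : d + e = n) {i : ℕ}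
    (hi : i < e) : (fun t : Fin n => skewMul σ (.single i 1) f t) ∈ skewCode σ n f :=
  ⟨.single i 1, toPoly_restrict fun c hc =>
    skewMul_apply_eq_zero_of_le σ (du := i + 1) (fun j hj => Finsupp.single_eq_of_ne (by omega))
      hfd (by omega)⟩

/-- The coordinates of `x^j h*` and `x^i f` pair to `σ ^ i` of the coefficient of
`f h = x^n - λ` in degree `e - i + j`, which lies strictly between `0` and `n`. -/
theorem sum_single_skewMul_skewRecip_mul_single_skewMul (hn : n ≠ 0) (hde : d + e = n)
    (hhe : ∀ j, e < j → h j = 0)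
    (hfh : skewMul σ f h = Finsupp.single n 1 - Finsupp.single 0 lam) {i j : ℕ} (hi : i < e)
    (hj : j < d) :
    ∑ t : Fin n, skewMul σ (.single j 1) (skewRecip σ e h) t * skewMul σ (.single i 1) f t = 0 := by
  set c := e - i + j
  set g : ℕ → F := fun t =>
    skewMul σ (.single j 1) (skewRecip σ e h) t * skewMul σ (.single i 1) f t
  have term (s : ℕ) (hs : s ≤ c) : g (i + s) = (σ ^ i) (f s * (σ ^ s) (h (c - s))) := by
    simp only [g, single_skewMul_apply, skewRecip_apply, one_mul, if_pos (Nat.le_add_right i s),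
      Nat.add_sub_cancel_left]
    by_cases hjs : j ≤ i + s
    · rw [if_pos hjs, if_pos (by omega), ← RingAut.mul_apply, ← pow_add, map_mul,
        ← RingAut.mul_apply, ← pow_add, Nat.add_sub_cancel' hjs,
        show e - (i + s - j) = c - s by omega, mul_comm]
    · rw [if_neg hjs, zero_mul, hhe (c - s) (by omega), map_zero, mul_zero, map_zero]
  calc ∑ t : Fin n, g t
      = ∑ t ∈ range n, g t := Fin.sum_univ_eq_sum_range g n
    _ = ∑ t ∈ Ico i (i + (c + 1)), g t := by
        refine (sum_subset (fun t ht => ?_) fun t ht hti => ?_).symm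
        · rw [mem_Ico] at ht; exact mem_range.mpr (by omega)
        · rw [mem_Ico, not_and_or, not_le, not_lt] at hti
          rcases hti with hti | hti
          · simp only [g, single_skewMul_apply, if_neg (not_le.mpr hti), mul_zero]
          · simp only [g, single_skewMul_apply, skewRecip_apply, if_neg (show ¬t - j ≤ e by omega),
              map_zero, mul_zero, ite_self, zero_mul]
    _ = ∑ s ∈ range (c + 1), (σ ^ i) (f s * (σ ^ s) (h (c - s))) := by
        rw [sum_Ico_eq_sum_range, Nat.add_sub_cancel_left]
        exact sum_congr rfl fun s hs => term s (by rw [mem_range] at hs; omega)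
    _ = 0 := by
        rw [← map_sum, ← skewMul_apply, hfh, X_pow_sub_C_apply hn, if_neg (by omega),
          if_neg (by omega), map_zero]

theorem skewMul_skewRecip_mem_dualSet (hn : n ≠ 0) (hf : f d = 1) (hfd : ∀ j, d < j → f j = 0)
    (hde : d + e = n) (hhe : ∀ j, e < j → h j = 0)
    (hfh : skewMul σ f h = Finsupp.single n 1 - Finsupp.single 0 lam) {p : ℕ →₀ F}
    (hp : ∀ j, d ≤ j → p j = 0) :
    (fun t : Fin n => skewMul σ p (skewRecip σ e h) t) ∈ dualSet (skewCode σ n f) := by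
  rintro b ⟨q, hq⟩
  have hqe := apply_eq_zero_of_skewMul_apply_eq_zero_of_monic σ hf hfd hde fun c hc => by
    rw [← hq, toPoly_apply_of_le b hc]
  have hb (t : Fin n) : b t = skewMul σ q f t := by rw [← hq, toPoly_apply]
  calc ∑ t : Fin n, skewMul σ p (skewRecip σ e h) t * b t
      = ∑ t : Fin n, (∑ j ∈ range d, p j * skewMul σ (.single j 1) (skewRecip σ e h) t) *
          ∑ i ∈ range e, q i * skewMul σ (.single i 1) f t := by
        simp_rw [hb, skewMul_apply_eq_sum_single_skewMul σ hp,
          skewMul_apply_eq_sum_single_skewMul σ hqe]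
    _ = ∑ j ∈ range d, ∑ i ∈ range e, p j * q i *
          ∑ t : Fin n, skewMul σ (.single j 1) (skewRecip σ e h) t *
            skewMul σ (.single i 1) f t := by
        simp_rw [sum_mul_sum, mul_sum]
        rw [sum_comm]
        refine sum_congr rfl fun j _ => ?_
        rw [sum_comm]
        exact sum_congr rfl fun i _ => sum_congr rfl fun t _ => by ring
    _ = 0 := sum_eq_zero fun j hj => sum_eq_zero fun i hi => by
        rw [sum_single_skewMul_skewRecip_mul_single_skewMul σ hn hde hhe hfh (mem_range.mp hi)
          (mem_range.mp hj), mul_zero]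

theorem eq_zero_of_mem_dualSet_skewCode (hf : f d = 1) (hfd : ∀ j, d < j → f j = 0)
    (hde : d + e = n) {a : Fin n → F} (ha : a ∈ dualSet (skewCode σ n f))
    (hlow : ∀ t : Fin n, (t : ℕ) < d → a t = 0) : a = 0 := by
  suffices ∀ t, a t = 0 from funext this
  intro t
  induction t using WellFoundedLT.induction with
  | _ t ih =>
  rcases lt_or_ge (t : ℕ) d with htd | htd
  · exact hlow t htd
  have hpair := ha _ (single_skewMul_mem_skewCode σ hfd hde (i := t - d) (by omega))
  rwa [sum_eq_single t (fun s _ hst => ?_) (by simp), single_skewMul_apply, if_pos (by omega),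
    one_mul, show (t : ℕ) - (t - d) = d by omega, hf, map_one, mul_one] at hpair
  rcases lt_or_gt_of_ne hst with hs | hs
  · rw [ih s hs, zero_mul]
  · have hs : (t : ℕ) < s := hs
    rw [single_skewMul_apply, if_pos (by omega), hfd _ (by omega), map_zero, mul_zero, mul_zero]

theorem exists_skewMul_skewRecip_eq_of_mem_dualSet (hn : n ≠ 0) (hf : f d = 1)
    (hfd : ∀ j, d < j → f j = 0) (hh : h e = 1) (hhe : ∀ j, e < j → h j = 0) (hde : d + e = n)
    (hfh : skewMul σ f h = Finsupp.single n 1 - Finsupp.single 0 lam) {a : Fin n → F}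
    (ha : a ∈ dualSet (skewCode σ n f)) :
    ∃ p : ℕ →₀ F, (∀ j, d ≤ j → p j = 0) ∧
      a = fun t : Fin n => skewMul σ p (skewRecip σ e h) t := by
  let L : (Fin d → F) →ₗ[F] (Fin d → F) :=
    { toFun := fun v u => skewMul σ (toPoly v) (skewRecip σ e h) u
      map_add' := fun v w => by funext u; simp [toPoly_add, add_skewMul]
      map_smul' := fun c v => by funext u; simp [toPoly_smul, smul_skewMul] }
  -- `L` is triangular with unit diagonal, since `h*` has constant term `1`.
  have hL : Function.Injective L := by
    refine (injective_iff_map_eq_zero L).mpr fun v hv => funext fun u => ?_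
    rw [← toPoly_apply v u]
    refine apply_eq_zero_of_skewMul_apply_eq_zero σ (v := skewRecip σ e h) (m := d)
      (by rw [skewRecip_apply_zero, hh]; exact one_ne_zero) (fun c hc => congrFun hv ⟨c, hc⟩) u
      u.isLt
  obtain ⟨v, hv⟩ := LinearMap.injective_iff_surjective.mp hL fun u => a ⟨u, by omega⟩
  have hp (j : ℕ) (hj : d ≤ j) : toPoly v j = 0 := toPoly_apply_of_le v hj
  refine ⟨toPoly v, hp, sub_eq_zero.mp ?_⟩
  refine eq_zero_of_mem_dualSet_skewCode σ hf hfd hde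
    (sub_mem_dualSet ha (skewMul_skewRecip_mem_dualSet σ hn hf hfd hde hhe hfh hp))
    fun t ht => ?_
  have := congrFun hv ⟨t, ht⟩
  simp only [L, LinearMap.coe_mk, AddHom.coe_mk] at this
  simp [this]

theorem dualSet_skewCode_subset_iff_exists_skewRecip_eq (hn : n ≠ 0) (hf : f d = 1)
    (hfd : ∀ j, d < j → f j = 0) (hh : h e = 1) (hhe : ∀ j, e < j → h j = 0) (hde : d + e = n)
    (hfh : skewMul σ f h = Finsupp.single n 1 - Finsupp.single 0 lam) :
    dualSet (skewCode σ n f) ⊆ skewCode σ n f ↔ ∃ g, skewRecip σ e h = skewMul σ g f := by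
  constructor
  · intro hsub
    rcases Nat.eq_zero_or_pos d with rfl | hd
    · have hf1 : f = .single 0 1 := by
        ext j
        rcases j with _ | j
        · simp [hf]
        · simp [hfd]
      exact ⟨skewRecip σ e h, by rw [hf1, skewMul_one]⟩
    · have hmem := skewMul_skewRecip_mem_dualSet σ hn hf hfd hde hhe hfh (p := .single 0 1)
        fun j hj => Finsupp.single_eq_of_ne (by omega)
      obtain ⟨g, hg⟩ := hsub (by simpa using hmem)
      rw [toPoly_restrict fun j hj => skewRecip_apply_of_lt σ h (by omega)] at hg
      exact ⟨g, hg⟩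
  · rintro ⟨g, hg⟩ a ha
    obtain ⟨p, hp, rfl⟩ := exists_skewMul_skewRecip_eq_of_mem_dualSet σ hn hf hfd hh hhe hde hfh ha
    refine ⟨skewMul σ p g, ?_⟩
    rw [toPoly_restrict fun c hc => skewMul_apply_eq_zero_of_le σ hp
      (fun j hj => skewRecip_apply_of_lt σ h hj) (by omega), hg, skewMul_assoc]

theorem exists_skewRecip_eq_skewMul_iff {k : ℕ} (hhne : h ≠ 0) (hf0 : f 0 ≠ 0) (hek : e ≤ k)
    (hhe : ∀ j, e < j → h j = 0)
    (hfh : skewMul σ f h = Finsupp.single n 1 - Finsupp.single 0 lam) :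
    (∃ g, skewRecip σ e h = skewMul σ g f) ↔
      ∃ q, skewMul σ q (Finsupp.single n 1 - Finsupp.single 0 lam) =
        skewMul σ (skewRecip σ k h) h := by
  rw [skewRecip_eq_single_skewMul σ hek hhe, ← hfh]
  constructor
  · rintro ⟨g, hg⟩
    exact ⟨skewMul σ (.single (k - e) 1) g, by simp only [hg, skewMul_assoc]⟩
  · rintro ⟨q, hq⟩
    rw [← skewMul_assoc] at hq
    exact exists_eq_skewMul_of_skewMul_eq_single_skewMul σ hf0 (skewMul_right_cancel σ hhne hq)

theorem dualSet_skewCode_subset_iff (hn : n ≠ 0) (hlam : lam ≠ 0) (hσlam : σ lam = lam)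
    {k : ℕ} (hk : ∀ j, k < j → h j = 0) (hmon : IsMonicPoly f)
    (hhf : skewMul σ h f = Finsupp.single n 1 - Finsupp.single 0 lam) :
    dualSet (skewCode σ n f) ⊆ skewCode σ n f ↔
      ∃ q, skewMul σ q (Finsupp.single n 1 - Finsupp.single 0 lam) =
        skewMul σ (skewRecip σ k h) h := by
  obtain ⟨d, hf, hfd⟩ := hmon
  obtain ⟨e, hde, hh, hhe⟩ := exists_monic_of_skewMul_eq_X_pow_sub_C σ hn hf hfd hhf
  have hf0 := apply_zero_ne_zero_of_skewMul_eq_X_pow_sub_C σ hn hlam hhf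
  have hfh := skewMul_comm_of_skewMul_eq_X_pow_sub_C σ hn hσlam hf hfd hh hhe hde hf0 hhf
  have hek : e ≤ k := by
    by_contra! hke
    rw [hk e hke] at hh
    exact zero_ne_one hh
  have hhne : h ≠ 0 := by rintro rfl; exact zero_ne_one hh
  rw [dualSet_skewCode_subset_iff_exists_skewRecip_eq σ hn hf hfd hh hhe hde hfh]
  exact exists_skewRecip_eq_skewMul_iff σ hhne hf0 hek hhe hfh

end Code

section Decomposition

variable {F R ι κ : Type} [Field F] [CommRing R] [Algebra F R] [DecidableEq ι]
  (φ : ι → R →ₐ[F] F) {e : ι → R} (hφe : ∀ l j, φ l (e j) = if l = j then 1 else 0)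
include hφe

theorem apply_mul_algebraMap_comp (x : κ → F) (l l' : ι) :
    (fun t => φ l' (e l * algebraMap F R (x t))) = if l' = l then x else 0 := by
  funext t
  split_ifs with hl <;> simp [hφe, hl]

variable [Fintype ι]

theorem apply_sum_mul_algebraMap (y : ι → F) (l : ι) :
    φ l (∑ j, e j * algebraMap F R (y j)) = y l := by
  simp [hφe]

variable {A : ι → Submodule F (κ → F)} {C : Set (κ → R)}
  (hφ : ∀ z, (∀ l, φ l z = 0) → z = 0)
  (hC : ∀ c, c ∈ C ↔ ∃ y : ι → κ → F, (∀ i, y i ∈ A i) ∧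
    c = fun t => ∑ j, e j * algebraMap F R (y j t))
include hφ hC

theorem mem_iff_forall_comp_mem {c : κ → R} : c ∈ C ↔ ∀ l, (fun t => φ l (c t)) ∈ A l := by
  refine (hC c).trans ⟨?_, fun hc => ⟨_, hc, funext fun t => sub_eq_zero.mp (hφ _ fun l => ?_)⟩⟩
  · rintro ⟨y, hy, rfl⟩ l
    simpa [apply_sum_mul_algebraMap φ hφe] using hy l
  · rw [map_sub, apply_sum_mul_algebraMap φ hφe, sub_self]

variable [Fintype κ]

theorem mem_dualSet_iff_forall_comp_mem {a : κ → R} :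
    a ∈ dualSet C ↔ ∀ l, (fun t => φ l (a t)) ∈ dualSet (A l : Set (κ → F)) := by
  refine ⟨fun ha l x hx => ?_, fun ha b hb => hφ _ fun l => ?_⟩
  · have hmem : (fun t => e l * algebraMap F R (x t)) ∈ C := by
      refine (mem_iff_forall_comp_mem φ hφe hφ hC).mpr fun l' => ?_
      rw [apply_mul_algebraMap_comp φ hφe]
      split_ifs with hl
      · exact hl ▸ hx
      · exact zero_mem _
    simpa [hφe] using congrArg (φ l) (ha _ hmem)
  · rw [map_sum]
    simp_rw [map_mul]
    exact ha l _ ((mem_iff_forall_comp_mem φ hφe hφ hC).mp hb l)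

theorem dualSet_subset_iff_forall : dualSet C ⊆ C ↔ ∀ l, dualSet (A l : Set (κ → F)) ⊆ A l := by
  simp_rw [Set.subset_def, mem_dualSet_iff_forall_comp_mem φ hφe hφ hC,
    mem_iff_forall_comp_mem φ hφe hφ hC]
  refine ⟨fun hsub l x hx => ?_, fun hsub a ha l => hsub l _ (ha l)⟩
  have hcomp := apply_mul_algebraMap_comp φ hφe x l
  have := hsub (fun t => e l * algebraMap F R (x t)) fun l' => ?_
  · have hl := this l
    rwa [hcomp, if_pos rfl] at hl
  · rw [hcomp]
    split_ifs with hl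
    · exact hl ▸ hx
    · exact fun b _ => by simp

end Decomposition

theorem two_ne_zero_of_card_eq_odd_pow {F : Type} [Field F] [Fintype F] {p m : ℕ} (hodd : Odd p)
    (hF : Fintype.card F = p ^ m) : (2 : F) ≠ 0 :=
  Ring.two_ne_zero fun hchar => by
    have := FiniteField.even_card_iff_char_two.mp hchar
    rw [hF, ← Nat.even_iff] at this
    exact Nat.not_even_iff_odd.mpr hodd.pow this

section CubicQuotient

variable {F : Type} [Field F]

/-- Evaluation at the roots `0, 1, -1` of `v ^ 3 - v`. -/
def evalRq (l : Fin 3) : Rq F →ₐ[F] F :=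
  Ideal.Quotient.liftₐ _ (Polynomial.aeval (![0, 1, -1] l : F)) fun a ha => by
    obtain ⟨c, rfl⟩ := Ideal.mem_span_singleton'.mp ha
    fin_cases l <;> norm_num

theorem evalRq_mk (l : Fin 3) (P : F[X]) :
    evalRq l (Ideal.Quotient.mk _ P) = P.eval (![0, 1, -1] l : F) := by
  simp [evalRq, Ideal.Quotient.liftₐ_apply]

theorem evalRq_eta (h2 : (2 : F) ≠ 0) (l j : Fin 3) :
    evalRq l (eta F j) = if l = j then 1 else 0 := by
  fin_cases l <;> fin_cases j <;> simp [_root_.eta, vR, evalRq_mk, one_add_one_eq_two, h2]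

theorem eq_zero_of_forall_evalRq_eq_zero (h2 : (2 : F) ≠ 0) (z : Rq F)
    (hz : ∀ l, evalRq l z = 0) : z = 0 := by
  obtain ⟨P, rfl⟩ := Ideal.Quotient.mk_surjective z
  have hinj : Function.Injective (![0, 1, -1] : Fin 3 → F) := by
    intro i j hij
    fin_cases i <;> fin_cases j <;> simp at hij ⊢
    all_goals exact h2 (by first | linear_combination hij | linear_combination -hij)
  have hdvd := Fintype.prod_dvd_of_coprime (Polynomial.pairwise_coprime_X_sub_C hinj)
    fun l => dvd_iff_isRoot.mpr (by rw [IsRoot, ← evalRq_mk, hz l])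
  rw [Ideal.Quotient.eq_zero_iff_mem, Ideal.mem_span_singleton]
  convert hdvd using 1
  simp [Fin.prod_univ_three]
  ring

end CubicQuotient

theorem stmt16_general (p m n : ℕ) (hodd : Odd p) [NeZero n]
    (F : Type) [Field F] [Fintype F] (hF : Fintype.card F = p ^ m)
    (Θ : RingAut F)
    (lam : Fin 3 → F) (hlam : ∀ i, lam i = 1 ∨ lam i = -1)
    (f h : Fin 3 → (ℕ →₀ F)) (k : Fin 3 → ℕ)
    (hk : ∀ i, ∀ j, k i < j → (h i) j = 0)
    (hmon : ∀ i, IsMonicPoly (f i))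
    (hdiv : ∀ i, skewMul Θ (h i) (f i) =
        Finsupp.single n 1 - Finsupp.single 0 (lam i))
    (A : Fin 3 → Submodule F (Fin n → F))
    (hA : ∀ i, ∀ c : Fin n → F, c ∈ A i ↔ ∃ q, toPoly c = skewMul Θ q (f i))
    (C : Submodule (Rq F) (Fin n → Rq F))
    (hC : ∀ c, c ∈ C ↔ ∃ y : Fin 3 → Fin n → F, (∀ i, y i ∈ A i) ∧
        c = fun t => ∑ j, eta F j * algebraMap F (Rq F) (y j t)) :
    dualSet (C : Set (Fin n → Rq F)) ⊆ (C : Set (Fin n → Rq F)) ↔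
      ∀ i, ∃ q : ℕ →₀ F,
        skewMul Θ q (Finsupp.single n 1 - Finsupp.single 0 (lam i)) =
          skewMul Θ (skewRecip Θ (k i) (h i)) (h i) := by
  have h2 : (2 : F) ≠ 0 := two_ne_zero_of_card_eq_odd_pow hodd hF
  rw [dualSet_subset_iff_forall evalRq (evalRq_eta h2) (eq_zero_of_forall_evalRq_eq_zero h2) hC]
  refine forall_congr' fun i => ?_
  rw [show (A i : Set (Fin n → F)) = skewCode Θ n (f i) from Set.ext (hA i)]
  have hlam0 : lam i ≠ 0 := by rcases hlam i with hl | hl <;> simp [hl]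
  have hfix : Θ (lam i) = lam i := by rcases hlam i with hl | hl <;> simp [hl]
  exact dualSet_skewCode_subset_iff Θ (NeZero.ne n) hlam0 hfix (hk i) (hmon i) (hdiv i)

theorem stmt16 (p m n : ℕ) (hp : p.Prime) (hodd : Odd p) (hm : 0 < m) [NeZero n]
    (F : Type) [Field F] [Fintype F] (hF : Fintype.card F = p ^ m)
    (Θ : RingAut F) (σ : RingAut (Rq F))
    (hσ : ∀ a b c : F,
      σ (algebraMap F (Rq F) a + algebraMap F (Rq F) b * vR F +
          algebraMap F (Rq F) c * vR F ^ 2) =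
        algebraMap F (Rq F) (Θ a) + algebraMap F (Rq F) (Θ b) * vR F +
          algebraMap F (Rq F) (Θ c) * vR F ^ 2)
    (lam : Fin 3 → F) (hlam : ∀ i, lam i = 1 ∨ lam i = -1)
    (δ : Rq F) (hδ : δ = ∑ i, algebraMap F (Rq F) (lam i) * eta F i)
    (f h : Fin 3 → (ℕ →₀ F)) (k : Fin 3 → ℕ)
    (hk : ∀ i, ∀ j, k i < j → (h i) j = 0)
    (hmon : ∀ i, IsMonicPoly (f i))
    (hdiv : ∀ i, skewMul Θ (h i) (f i) =
        Finsupp.single n 1 - Finsupp.single 0 (lam i))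
    (A : Fin 3 → Submodule F (Fin n → F))
    (hA : ∀ i, ∀ c : Fin n → F, c ∈ A i ↔ ∃ q, toPoly c = skewMul Θ q (f i))
    (C : Submodule (Rq F) (Fin n → Rq F))
    (hC : ∀ c, c ∈ C ↔ ∃ y : Fin 3 → Fin n → F, (∀ i, y i ∈ A i) ∧
        c = fun t => ∑ j, eta F j * algebraMap F (Rq F) (y j t))
    (hconst : IsSkewConstacyclic σ δ (C : Set (Fin n → Rq F))) :
    dualSet (C : Set (Fin n → Rq F)) ⊆ (C : Set (Fin n → Rq F)) ↔
      ∀ i, ∃ q : ℕ →₀ F,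
        skewMul Θ q (Finsupp.single n 1 - Finsupp.single 0 (lam i)) =
          skewMul Θ (skewRecip Θ (k i) (h i)) (h i) :=
  stmt16_general p m n hodd F hF Θ lam hlam f h k hk hmon hdiv A hA C hC
end
end

section
/- Let M ∈ GL₃(F_{p^m}) satisfy M Mᵗ = c I₃ for some nonzero scalar c ∈ F_{p^m}, and let ψ: Rⁿ → F_{p^m}^{3n} be the associated Gray map. If C ⊆ Rⁿ is a linear code with C^⊥ ⊆ C, then ψ(C)^⊥ ⊆ ψ(C) in F_{p^m}^{3n}. -/
open Polynomial

set_option synthInstance.maxHeartbeats 1000000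
set_option maxHeartbeats 1000000

noncomputable section

/-! The idempotents `η₀, η₁, η₂` are orthogonal and span `R` over `F`, so multiplication in `R`
is componentwise in `η`-coordinates and `η_j C ⊆ C`. Given `a ⊥ ψ(C)`, let `x` have
`η`-coordinates `c⁻¹ M a_t` in position `t`; since `Mᵀ M = c I`, `ψ x = a`. For `y ∈ C`, the
`j`-th `η`-coordinate of `x · y` is `c⁻¹ ⟨a, ψ (η_j y)⟩ = 0`, so `x ∈ C^⊥ ⊆ C`. -/

open scoped Matrix

lemma Matrix.transpose_mul_self_eq_smul_one {ι K : Type*} [Fintype ι] [DecidableEq ι] [Field K]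
    {M : Matrix ι ι K} {c : K} (hc : c ≠ 0) (h : M * Mᵀ = c • 1) : Mᵀ * M = c • 1 := by
  have hright : M * (c⁻¹ • Mᵀ) = 1 := by
    rw [Matrix.mul_smul, h, smul_smul, inv_mul_cancel₀ hc, one_smul]
  have hleft : (c⁻¹ • Mᵀ) * M = 1 := mul_eq_one_comm.mp hright
  rw [← one_smul K (Mᵀ * M), ← mul_inv_cancel₀ hc, ← smul_smul, ← Matrix.smul_mul, hleft]

lemma Matrix.vecMul_inv_smul_mulVec {ι K : Type*} [Fintype ι] [DecidableEq ι] [Field K]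
    {M : Matrix ι ι K} {c : K} (hc : c ≠ 0) (h : Mᵀ * M = c • 1) (v : ι → K) :
    (c⁻¹ • M *ᵥ v) ᵥ* M = v := by
  rw [Matrix.smul_vecMul, ← Matrix.vecMul_transpose, Matrix.vecMul_vecMul, h, Matrix.vecMul_smul,
    Matrix.vecMul_one, smul_smul, inv_mul_cancel₀ hc, one_smul]

lemma two_ne_zero_of_odd_card {K : Type*} [Field K] [Fintype K] (h : Odd (Fintype.card K)) :
    (2 : K) ≠ 0 :=
  Ring.two_ne_zero fun hchar =>
    Nat.not_even_iff_odd.mpr h (Nat.even_iff.mpr (FiniteField.even_card_iff_char_two.mp hchar))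

section IdempotentCoordinates

variable {R A ι : Type*} [CommSemiring R] [CommSemiring A] [Algebra R A] [Fintype ι]
  {e : ι → A}

lemma OrthogonalIdempotents.sum_algebraMap_mul_mul_sum (he : OrthogonalIdempotents e)
    (β δ : ι → R) :
    (∑ i, algebraMap R A (β i) * e i) * (∑ i, algebraMap R A (δ i) * e i) =
      ∑ i, algebraMap R A (β i * δ i) * e i := by
  rw [Finset.sum_mul_sum]
  refine Finset.sum_congr rfl fun i _ => ?_
  rw [Finset.sum_eq_single i (fun j _ hji => ?_) (by simp), mul_mul_mul_comm, ← map_mul,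
    (he.idem i).eq]
  rw [mul_mul_mul_comm, he.ortho hji.symm, mul_zero]

/-- The `R`-span of `e`, closed under multiplication by orthogonality. -/
def CompleteOrthogonalIdempotents.coordSubalgebra (he : CompleteOrthogonalIdempotents e) :
    Subalgebra R A where
  carrier := {r | ∃ β : ι → R, r = ∑ i, algebraMap R A (β i) * e i}
  mul_mem' := by
    rintro _ _ ⟨β, rfl⟩ ⟨δ, rfl⟩
    exact ⟨β * δ, he.toOrthogonalIdempotents.sum_algebraMap_mul_mul_sum β δ⟩
  add_mem' := by
    rintro _ _ ⟨β, rfl⟩ ⟨δ, rfl⟩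
    refine ⟨β + δ, ?_⟩
    simp only [Pi.add_apply, map_add, add_mul, Finset.sum_add_distrib]
  algebraMap_mem' r := ⟨fun _ => r, by rw [← Finset.mul_sum, he.complete, mul_one]⟩

lemma OrthogonalIdempotents.mul_sum_algebraMap_mul (he : OrthogonalIdempotents e) (j : ι)
    (δ : ι → R) :
    e j * ∑ i, algebraMap R A (δ i) * e i = algebraMap R A (δ j) * e j := by
  rw [Finset.mul_sum, Finset.sum_eq_single j (fun i _ hij => ?_) (by simp), mul_left_comm,
    (he.idem j).eq]
  rw [mul_left_comm, he.ortho hij.symm, mul_zero]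

lemma CompleteOrthogonalIdempotents.mem_coordSubalgebra [DecidableEq ι]
    (he : CompleteOrthogonalIdempotents e) (i : ι) : e i ∈ he.coordSubalgebra (R := R) :=
  ⟨Pi.single i 1, by simp [Pi.single_apply]⟩

end IdempotentCoordinates

section RingRq

variable {F : Type} [Field F]

lemma vR_pow_three : vR F ^ 3 = vR F := by
  rw [vR, ← map_pow, ← sub_eq_zero, ← map_sub, Ideal.Quotient.eq_zero_iff_mem]
  exact Ideal.subset_span rfl

lemma algebraMap_half_mul_two (h2 : (2 : F) ≠ 0) : algebraMap F (Rq F) 2⁻¹ * 2 = 1 := by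
  rw [← map_ofNat (algebraMap F (Rq F)) 2, ← map_mul, inv_mul_cancel₀ h2, map_one]

lemma eta_completeOrthogonalIdempotents (h2 : (2 : F) ≠ 0) :
    CompleteOrthogonalIdempotents (eta F) := by
  have hv := vR_pow_three (F := F)
  refine CompleteOrthogonalIdempotents.iff_ortho_complete.mpr ⟨?_, ?_⟩
  · intro i j hij
    fin_cases i <;> fin_cases j <;>
      simp only [Fin.zero_eta, Fin.isValue, Fin.mk_one, Fin.reduceFinMk, ne_eq, not_true_eq_false,
        _root_.eta, Matrix.cons_val_zero, Matrix.cons_val_one, Matrix.cons_val] at hij ⊢ <;>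
      first
        | linear_combination -(algebraMap F (Rq F) 2⁻¹ * (vR F + 1)) * hv
        | linear_combination -(algebraMap F (Rq F) 2⁻¹ * (vR F - 1)) * hv
        | linear_combination (algebraMap F (Rq F) 2⁻¹) ^ 2 * vR F * hv
  · simp only [_root_.eta, Fin.sum_univ_three, Matrix.cons_val_zero, Matrix.cons_val_one,
      Matrix.cons_val]
    linear_combination vR F ^ 2 * algebraMap_half_mul_two h2

lemma vR_eq_eta_one_sub_eta_two (h2 : (2 : F) ≠ 0) : vR F = eta F 1 - eta F 2 := by
  simp only [_root_.eta, Matrix.cons_val_one, Matrix.cons_val]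
  linear_combination -(vR F) * algebraMap_half_mul_two h2

lemma exists_eq_sum_eta (h2 : (2 : F) ≠ 0) (r : Rq F) :
    ∃ β : Fin 3 → F, r = ∑ i, algebraMap F (Rq F) (β i) * eta F i := by
  have he := eta_completeOrthogonalIdempotents h2
  have hv : vR F ∈ he.coordSubalgebra (R := F) := by
    rw [vR_eq_eta_one_sub_eta_two h2]
    exact sub_mem (he.mem_coordSubalgebra 1) (he.mem_coordSubalgebra 2)
  have htop : he.coordSubalgebra (R := F) = ⊤ :=
    top_unique (AdjoinRoot.adjoinRoot_eq_top.symm.le.trans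
      (Algebra.adjoin_le (Set.singleton_subset_iff.mpr hv)))
  exact (htop ▸ Algebra.mem_top : r ∈ he.coordSubalgebra (R := F))

end RingRq

section GrayMap

variable {F A ι κ : Type} [Field F] [CommRing A] [Algebra F A] [Fintype ι]
  {e : ι → A} {M : Matrix ι ι F}

def IsGrayMap (e : ι → A) (M : Matrix ι ι F) (ψ : (κ → A) → κ × ι → F) : Prop :=
  ∀ (x : κ → A) (β : κ → ι → F), (∀ t, x t = ∑ i, algebraMap F A (β t i) * e i) →
    ∀ t i, ψ x (t, i) = (β t ᵥ* M) i

lemma OrthogonalIdempotents.sum_mul_eq_sum_algebraMap_mul [Fintype κ]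
    (he : OrthogonalIdempotents e)
    {x y : κ → A} {β δ : κ → ι → F} (hx : ∀ t, x t = ∑ i, algebraMap F A (β t i) * e i)
    (hy : ∀ t, y t = ∑ i, algebraMap F A (δ t i) * e i) :
    ∑ t, x t * y t = ∑ j, algebraMap F A (∑ t, β t j * δ t j) * e j := by
  simp_rw [hx, hy, he.sum_algebraMap_mul_mul_sum, map_sum, Finset.sum_mul]
  exact Finset.sum_comm

lemma IsGrayMap.sum_mul_apply_smul [DecidableEq ι] [Fintype κ] {ψ : (κ → A) → κ × ι → F}
    (hψ : IsGrayMap e M ψ) (he : OrthogonalIdempotents e) {y : κ → A} {δ : κ → ι → F}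
    (hy : ∀ t, y t = ∑ i, algebraMap F A (δ t i) * e i) (a : κ × ι → F) (j : ι) :
    ∑ s, a s * ψ (e j • y) s = ∑ t, δ t j * (M *ᵥ fun i => a (t, i)) j := by
  have hrep : ∀ t,
      (e j • y) t = ∑ i, algebraMap F A ((Pi.single j (δ t j) : ι → F) i) * e i := by
    intro t
    rw [Pi.smul_apply, smul_eq_mul, hy, he.mul_sum_algebraMap_mul,
      Fintype.sum_eq_single j fun i hij => by rw [Pi.single_eq_of_ne hij, map_zero, zero_mul],
      Pi.single_eq_same]
  simp only [Fintype.sum_prod_type, hψ _ _ hrep, Matrix.single_vecMul, Pi.smul_apply,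
    Matrix.row_apply, smul_eq_mul, Matrix.mulVec, dotProduct, Finset.mul_sum]
  refine Finset.sum_congr rfl fun t _ => Finset.sum_congr rfl fun i _ => ?_
  ring

lemma IsGrayMap.apply_eq_self [DecidableEq ι] {ψ : (κ → A) → κ × ι → F}
    (hψ : IsGrayMap e M ψ) {c : F} (hc : c ≠ 0) (hM : Mᵀ * M = c • 1) (a : κ × ι → F) :
    ψ (fun t => ∑ i, algebraMap F A ((c⁻¹ • M *ᵥ fun i => a (t, i)) i) * e i) = a := by
  funext ⟨t, i⟩
  rw [hψ _ _ fun _ => rfl, Matrix.vecMul_inv_smul_mulVec hc hM]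

theorem IsGrayMap.dualSet_image_subset_image [DecidableEq ι] [Fintype κ]
    {ψ : (κ → A) → κ × ι → F}
    (hψ : IsGrayMap e M ψ) (he : OrthogonalIdempotents e)
    (hspan : ∀ r : A, ∃ β : ι → F, r = ∑ i, algebraMap F A (β i) * e i) {c : F} (hc : c ≠ 0)
    (hM : Mᵀ * M = c • 1) {C : Submodule A (κ → A)} (hdual : dualSet (C : Set (κ → A)) ⊆ C) :
    dualSet (ψ '' (C : Set (κ → A))) ⊆ ψ '' (C : Set (κ → A)) := by
  intro a ha
  set β : κ → ι → F := fun t => c⁻¹ • M *ᵥ fun i => a (t, i)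
  refine ⟨_, hdual fun y hy => ?_, hψ.apply_eq_self hc hM a⟩
  choose δ hδ using fun t => hspan (y t)
  rw [he.sum_mul_eq_sum_algebraMap_mul (β := β) (fun _ => rfl) hδ]
  refine Finset.sum_eq_zero fun j _ => ?_
  have hcoord : ∑ t, β t j * δ t j = c⁻¹ * ∑ s, a s * ψ (e j • y) s := by
    simp only [hψ.sum_mul_apply_smul he hδ, β, Pi.smul_apply, smul_eq_mul, Finset.mul_sum]
    exact Finset.sum_congr rfl fun t _ => by ring
  rw [hcoord, ha _ ⟨_, C.smul_mem _ hy, rfl⟩, mul_zero, map_zero, zero_mul]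

end GrayMap

theorem stmt19_general (p m n : ℕ) (hodd : Odd p)
    (F : Type) [Field F] [Fintype F] (hF : Fintype.card F = p ^ m)
    (M : Matrix (Fin 3) (Fin 3) F) (c : F) (hc : c ≠ 0)
    (hMMt : M * M.transpose = c • 1)
    (ψ : (Fin n → Rq F) →ₗ[F] (Fin n × Fin 3 → F))
    (hψ : ∀ (x : Fin n → Rq F) (β : Fin n → Fin 3 → F),
      (∀ t, x t = ∑ i, algebraMap F (Rq F) (β t i) * eta F i) →
      ∀ t i, ψ x (t, i) = ∑ j, β t j * M j i)
    (C : Submodule (Rq F) (Fin n → Rq F))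
    (hdual : dualSet (C : Set (Fin n → Rq F)) ⊆ (C : Set (Fin n → Rq F))) :
    dualSet (⇑ψ '' (C : Set (Fin n → Rq F))) ⊆ ⇑ψ '' (C : Set (Fin n → Rq F)) := by
  have h2 : (2 : F) ≠ 0 := two_ne_zero_of_odd_card (hF ▸ hodd.pow)
  exact IsGrayMap.dualSet_image_subset_image hψ
    (eta_completeOrthogonalIdempotents h2).toOrthogonalIdempotents (exists_eq_sum_eta h2) hc
    (Matrix.transpose_mul_self_eq_smul_one hc hMMt) hdual

theorem stmt19 (p m n : ℕ) (hp : p.Prime) (hodd : Odd p) (hm : 0 < m)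
    (F : Type) [Field F] [Fintype F] (hF : Fintype.card F = p ^ m)
    (M : Matrix (Fin 3) (Fin 3) F) (c : F) (hc : c ≠ 0)
    (hMMt : M * M.transpose = c • 1)
    (ψ : (Fin n → Rq F) →ₗ[F] (Fin n × Fin 3 → F))
    (hψ : ∀ (x : Fin n → Rq F) (β : Fin n → Fin 3 → F),
      (∀ t, x t = ∑ i, algebraMap F (Rq F) (β t i) * eta F i) →
      ∀ t i, ψ x (t, i) = ∑ j, β t j * M j i)
    (C : Submodule (Rq F) (Fin n → Rq F))
    (hdual : dualSet (C : Set (Fin n → Rq F)) ⊆ (C : Set (Fin n → Rq F))) :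
    dualSet (⇑ψ '' (C : Set (Fin n → Rq F))) ⊆ ⇑ψ '' (C : Set (Fin n → Rq F)) :=
  stmt19_general p m n hodd F hF M c hc hMMt ψ hψ C hdual
end
end
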